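/- Let V be a real vector space of dimension 2n with n ≥ 2, and let ω be a nondegenerate alternating bilinear form on V. If ξ is a linear functional on V (an alternating 1-form) with ξ ∧ ω = 0, then ξ = 0. -/

import Mathlib

/-!
Expanding the wedge product gives, for all `x y z`,
`(ξ ∧ ω)(x, y, z) = ξ x ω(y, z) - ξ y ω(x, z) + ξ z ω(x, y)`.
If `ξ u ≠ 0`, then since `dim V ≥ 3` the hyperplanes `ker ξ` and `ker ω(u, ·)` share a nonzero
vector `w`, and nondegeneracy gives `t` with `ω(w, t) ≠ 0`. At `(u, w, t)` the identity collapses to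
`ξ u ω(w, t) = 0`, a contradiction.
-/

open Module

/-- The wedge product of an alternating `m`-form and an alternating `n`-form on a real
vector space `V`, producing an alternating `(m + n)`-form (defined, up to the usual
normalization constant, via `AlternatingMap.domCoprod`). -/
noncomputable def altWedge {V : Type*} [AddCommGroup V] [Module ℝ V] {m n : ℕ}
    (f : V [⋀^Fin m]→ₗ[ℝ] ℝ) (g : V [⋀^Fin n]→ₗ[ℝ] ℝ) : V [⋀^Fin (m + n)]→ₗ[ℝ] ℝ :=
  (TensorProduct.lid ℝ ℝ).toLinearMap.compAlternatingMap
    ((f.domCoprod g).domDomCongr finSumFinEquiv)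

section

variable {R M : Type*} [CommSemiring R] [AddCommMonoid M] [Module R M]

theorem AlternatingMap.map_vec_two_swap {N : Type*} [AddCommGroup N] [Module R N]
    (ω : M [⋀^Fin 2]→ₗ[R] N) (a b : M) : ω ![b, a] = -ω ![a, b] := by
  have h := ω.map_swap ![a, b] (i := 0) (j := 1) (by decide)
  rwa [show ![a, b] ∘ Equiv.swap 0 1 = ![b, a] by ext i; fin_cases i <;> rfl] at h

theorem MultilinearMap.domCoprod_fin_one_fin_two_apply {N₁ N₂ : Type*} [AddCommMonoid N₁]
    [Module R N₁] [AddCommMonoid N₂] [Module R N₂]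
    (f : MultilinearMap R (fun _ : Fin 1 => M) N₁) (g : MultilinearMap R (fun _ : Fin 2 => M) N₂)
    (v : Fin 1 ⊕ Fin 2 → M) :
    f.domCoprod g v = f ![v (.inl 0)] ⊗ₜ g ![v (.inr 0), v (.inr 1)] := by
  rw [MultilinearMap.domCoprod_apply]
  congr 2 <;> ext i <;> fin_cases i <;> rfl

end

theorem Equiv.Perm.univ_fin_one_sum_fin_two :
    (Finset.univ : Finset (Perm (Fin 1 ⊕ Fin 2))) =
      {1, swap (.inl 0) (.inr 0), swap (.inl 0) (.inr 1), swap (.inr 0) (.inr 1),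
        swap (.inl 0) (.inr 0) * swap (.inr 0) (.inr 1),
        swap (.inl 0) (.inr 1) * swap (.inr 0) (.inr 1)} := by
  decide

theorem altWedge_apply_vec_three {V : Type*} [AddCommGroup V] [Module ℝ V]
    (ξ : V [⋀^Fin 1]→ₗ[ℝ] ℝ) (ω : V [⋀^Fin 2]→ₗ[ℝ] ℝ) (x y z : V) :
    altWedge ξ ω ![x, y, z] = ξ ![x] * ω ![y, z] - ξ ![y] * ω ![x, z] + ξ ![z] * ω ![x, y] := by
  have hv : ![x, y, z] ∘ finSumFinEquiv = Sum.elim ![x] ![y, z] := by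
    ext (i | i) <;> fin_cases i <;> rfl
  -- `domCoprod` is a sum over a quotient of permutations; its alternatization is `1! * 2! = 2`
  -- times it and is a plain sum over the six permutations, which we enumerate.
  have h := congr(TensorProduct.lid ℝ ℝ
    ($(MultilinearMap.domCoprod_alternization_eq ξ ω) (![x, y, z] ∘ finSumFinEquiv)))
  rw [AlternatingMap.smul_apply, map_nsmul, nsmul_eq_mul] at h
  change _ = _ * altWedge ξ ω ![x, y, z] at h
  rw [MultilinearMap.alternatization_apply, Equiv.Perm.univ_fin_one_sum_fin_two,
    Finset.sum_insert (by decide), Finset.sum_insert (by decide), Finset.sum_insert (by decide),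
    Finset.sum_insert (by decide), Finset.sum_insert (by decide), Finset.sum_singleton, hv] at h
  simp only [MultilinearMap.domDomCongr_apply, MultilinearMap.domCoprod_fin_one_fin_two_apply,
    AlternatingMap.coe_multilinearMap, Equiv.Perm.sign_one, Equiv.Perm.sign_swap', Equiv.Perm.sign_mul,
    Equiv.Perm.coe_one, Equiv.Perm.coe_mul, id_eq, Function.comp_apply, Equiv.swap_apply_left,
    Equiv.swap_apply_right, Equiv.swap_apply_of_ne_of_ne, ne_eq, reduceCtorEq, Sum.inr.injEq,
    one_ne_zero, zero_ne_one, not_false_eq_true, ↓reduceIte, Sum.elim_inl, Sum.elim_inr,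
    Matrix.cons_val_zero, Matrix.cons_val_one, ω.map_vec_two_swap x y, ω.map_vec_two_swap y z,
    ω.map_vec_two_swap x z, one_smul, Units.neg_smul, smul_eq_mul, mul_neg, mul_one, one_mul,
    map_add, map_neg, TensorProduct.lid_tmul, Fintype.card_fin, Nat.factorial_one,
    Nat.factorial_two, Nat.cast_ofNat] at h
  linarith

section

variable {K V : Type*} [Field K] [AddCommGroup V] [Module K V] [FiniteDimensional K V]

theorem exists_ne_zero_apply_eq_zero_apply_eq_zero (hV : 2 < finrank K V) (f g : V →ₗ[K] K) :
    ∃ w ≠ 0, f w = 0 ∧ g w = 0 := by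
  have : LinearMap.ker (f.prod g) ≠ ⊥ :=
    LinearMap.ker_ne_bot_of_finrank_lt (by simpa using hV)
  obtain ⟨w, hw, hw0⟩ := Submodule.exists_mem_ne_zero_of_ne_bot this
  exact ⟨w, hw0, by simpa [Prod.ext_iff] using hw⟩

/-- `h` is `(φ ∧ B)(x, y, z) = 0` written out. -/
theorem LinearMap.eq_zero_of_wedge_eq_zero_of_nondegenerate (hV : 2 < finrank K V)
    {φ : V →ₗ[K] K} {B : V → V →ₗ[K] K} (hB : ∀ v ≠ 0, ∃ w, B v w ≠ 0)
    (h : ∀ x y z, φ x * B y z - φ y * B x z + φ z * B x y = 0) : φ = 0 := by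
  by_contra hφ
  obtain ⟨u, hu⟩ : ∃ u, φ u ≠ 0 := by simpa [LinearMap.ext_iff] using hφ
  obtain ⟨w, hw, hφw, hBuw⟩ := exists_ne_zero_apply_eq_zero_apply_eq_zero hV φ (B u)
  obtain ⟨t, ht⟩ := hB w hw
  have huwt := h u w t
  rw [hφw, hBuw] at huwt
  exact mul_ne_zero hu ht (by simpa using huwt)

end

/-- If `V` is a real vector space of dimension `2 n` with `n ≥ 2` and `ω` is a
nondegenerate alternating bilinear form on `V`, then for any linear functional on `V`,
viewed as an alternating 1-form `ξ`, we have: `ξ ∧ ω = 0` implies `ξ = 0`. -/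
theorem wedge_with_nondeg_two_form_injective_on_one_forms
    {V : Type*} [AddCommGroup V] [Module ℝ V] [FiniteDimensional ℝ V]
    (n : ℕ) (hn : 2 ≤ n) (hdim : Module.finrank ℝ V = 2 * n)
    (ω : V [⋀^Fin 2]→ₗ[ℝ] ℝ)
    (hω : ∀ v : V, v ≠ 0 → ∃ w : V, ω ![v, w] ≠ 0)
    (ξ : V [⋀^Fin 1]→ₗ[ℝ] ℝ)
    (h : altWedge ξ ω = 0) : ξ = 0 := by
  let e := AlternatingMap.ofSubsingleton ℝ V ℝ (0 : Fin 1)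
  have hξ : e.symm ξ = 0 := by
    refine LinearMap.eq_zero_of_wedge_eq_zero_of_nondegenerate (by omega)
      (B := fun u => e.symm (ω.curryLeft u)) ?_ fun x y z => ?_
    · simpa [e, Matrix.vec_single_eq_const] using hω
    · simpa [e, Matrix.vec_single_eq_const, h] using (altWedge_apply_vec_three ξ ω x y z).symm
  rw [← e.apply_symm_apply ξ, hξ]
  ext
  simp [e]
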